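/- arXiv:2403.00149 — 3 statements merged into one kernel-verified Lean document; each statement's English description precedes it below -/
import Mathlib

section
/- Define a_{n,i} = ct[(x⁻¹ + 1 + x)^n · x^i], i.e., the coefficient of x^{-i} (equivalently x^i) in (x⁻¹+1+x)^n. Then for all nonnegative integers n and i: a_{n+i,0} = a_{i,0}·a_{n,0} + 2·Σ_{j=1}^{i} a_{i,j}·a_{n,j}. -/
/-!
Write `P = x⁻¹ + 1 + x`, so that `a n i` is the coefficient of `x^{-i}` in `P^n`. The constant
term of `P^(n+i) = P^i · P^n` is the convolution `∑_{|k| ≤ i} [x^k]P^i · [x^{-k}]P^n`, the sum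
being finite because `P^i` is supported in `[-i, i]`. Since `P` is invariant under `x ↦ x⁻¹`,
the summand is even in `k`, and folding the sum at `k = 0` gives the identity.
-/

open LaurentPolynomial

/-- The constant term of an integer Laurent polynomial. -/
noncomputable def ct (Q : LaurentPolynomial ℤ) : ℤ := Q.coeff 0

/-- `a n i` is the coefficient of `x^{-i}` (equivalently `x^i`) in `(x⁻¹+1+x)^n`. -/
noncomputable def a (n i : ℕ) : ℤ := ct ((T (-1) + 1 + T 1) ^ n * T (i : ℤ))

theorem Finset.sum_Icc_of_even {M : Type*} [AddCommGroup M] {F : ℤ → M} (hF : F.Even) (N : ℕ) :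
    ∑ k ∈ Icc (-N : ℤ) N, F k = F 0 + 2 • ∑ j ∈ Icc 1 N, F j := by
  rw [sum_Icc_of_even_eq_range hF, sum_range_succ', ← Ico_add_one_right_eq_Icc,
    sum_Ico_eq_sum_range]
  simp only [Nat.cast_add, Nat.cast_one, Nat.cast_zero, add_tsub_cancel_right, add_comm 1]
  abel

open Finset

namespace LaurentPolynomial

variable {R : Type*} [Semiring R]

theorem coeff_mul_T (f : R[T;T⁻¹]) (m n : ℤ) : (f * T n).coeff m = f.coeff (m - n) := by
  rw [T, AddMonoidAlgebra.coeff_mul_single_apply, mul_one, sub_eq_add_neg]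

theorem coeff_zero_mul_eq_sum (f g : R[T;T⁻¹]) {s : Finset ℤ} (hs : f.coeff.support ⊆ s) :
    (f * g).coeff 0 = ∑ k ∈ s, f.coeff k * g.coeff (-k) := by
  rw [AddMonoidAlgebra.coeff_mul_apply_left, Finsupp.sum_of_support_subset _ hs]
  · simp only [add_zero]
  · simp

theorem support_coeff_pow_subset_Icc {f : R[T;T⁻¹]} {b c : ℤ} (h : f.coeff.support ⊆ Icc b c)
    (n : ℕ) : (f ^ n).coeff.support ⊆ Icc (n * b) (n * c) := by
  classical
  induction n with
  | zero =>
    intro k hk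
    obtain ⟨rfl, -⟩ : 0 = k ∧ _ := by simpa [← T_zero] using hk
    simp
  | succ m ih =>
    rw [pow_succ]
    refine (AddMonoidAlgebra.support_coeff_mul_subset _ _).trans ?_
    refine (add_subset_add ih h).trans ((Icc_add_Icc_subset _ _ _ _).trans ?_)
    push_cast
    simp only [add_mul, one_mul, subset_refl]

end LaurentPolynomial

noncomputable def trinomial : ℤ[T;T⁻¹] := T (-1) + 1 + T 1

theorem a_eq_coeff_trinomial_pow (n i : ℕ) : a n i = (trinomial ^ n).coeff (-i) := by
  rw [a, ct, coeff_mul_T, zero_sub]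
  rfl

theorem invert_trinomial : invert trinomial = trinomial := by
  simp only [trinomial, map_add, invert_T, map_one, neg_neg]
  abel

theorem coeff_trinomial_pow_neg (n : ℕ) (k : ℤ) :
    (trinomial ^ n).coeff (-k) = (trinomial ^ n).coeff k := by
  rw [← invert_apply, map_pow, invert_trinomial]

theorem support_coeff_trinomial_pow_subset (n : ℕ) :
    (trinomial ^ n).coeff.support ⊆ Icc (-(n : ℤ)) n := by
  have h : trinomial.coeff.support ⊆ Icc (-1) 1 := by
    intro k hk
    contrapose! hk
    simp only [mem_Icc] at hk
    rw [Finsupp.notMem_support_iff]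
    simp only [trinomial, ← T_zero, AddMonoidAlgebra.coeff_add, Finsupp.coe_add, Pi.add_apply,
      T_apply]
    split_ifs <;> omega
  simpa using support_coeff_pow_subset_Icc h n

theorem stmt_8 (n i : ℕ) :
    a (n + i) 0 = a i 0 * a n 0 + 2 * ∑ j ∈ Finset.Icc 1 i, a i j * a n j := by
  have heven : Function.Even fun k ↦ (trinomial ^ i).coeff k * (trinomial ^ n).coeff (-k) := by
    intro k
    dsimp only
    rw [coeff_trinomial_pow_neg, neg_neg, coeff_trinomial_pow_neg n k]
  rw [a_eq_coeff_trinomial_pow, Nat.cast_zero, neg_zero, add_comm, pow_add,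
    coeff_zero_mul_eq_sum _ _ (support_coeff_trinomial_pow_subset i), sum_Icc_of_even heven,
    nsmul_eq_mul, Nat.cast_ofNat]
  simp only [a_eq_coeff_trinomial_pow, coeff_trinomial_pow_neg i, Nat.cast_zero, neg_zero]
end

section
/- Let T_n be the central trinomial coefficients, T_n = ct[(x⁻¹+1+x)^n]. If n is a nonnegative integer whose base-3 expansion contains the digit 2, then T_n ≡ 0 (mod 3). -/
/-!
Over `𝔽_p` Frobenius gives `(x⁻¹ + 1 + x)^p = x⁻ᵖ + 1 + xᵖ`, so writing `n = p q + r` with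
`r < p`, `(x⁻¹ + 1 + x)^n = (x⁻ᵖ + 1 + xᵖ)^q (x⁻¹ + 1 + x)^r`. The first factor lives in degrees
divisible by `p` and the second in degrees of absolute value `< p`, so only their constant terms
meet in the constant term of the product. This yields the Lucas-type congruence
`T_n ≡ ∏ T_{dᵢ} (mod p)` over the base-`p` digits `dᵢ` of `n`, and for `p = 3` a digit `2`
contributes the factor `T_2 = 3 ≡ 0`.
-/

open LaurentPolynomial

namespace LaurentPolynomial

variable {R : Type*}

lemma mapRingHom_T {S : Type*} [Semiring R] [Semiring S] (f : R →+* S) (n : ℤ) :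
    AddMonoidAlgebra.mapRingHom ℤ f (T n) = T n := by
  rw [T, AddMonoidAlgebra.mapRingHom_single, map_one, T]

section Expand

variable [CommSemiring R]

noncomputable def expand (k : ℤ) : R[T;T⁻¹] →+* R[T;T⁻¹] :=
  AddMonoidAlgebra.mapDomainRingHom R (AddMonoidHom.mulLeft k)

lemma expand_single (k n : ℤ) (a : R) :
    expand k (.single n a : R[T;T⁻¹]) = .single (k * n) a :=
  AddMonoidAlgebra.mapDomain_single

lemma expand_T (k n : ℤ) : expand k (T n : R[T;T⁻¹]) = T (k * n) :=
  expand_single k n 1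

lemma coeff_expand_mul {k : ℤ} (hk : k ≠ 0) (f : R[T;T⁻¹]) (n : ℤ) :
    (expand k f).coeff (k * n) = f.coeff n :=
  Finsupp.mapDomain_apply (mul_right_injective₀ hk) f.coeff n

lemma coeff_expand_of_not_dvd {k n : ℤ} (h : ¬ k ∣ n) (f : R[T;T⁻¹]) :
    (expand k f).coeff n = 0 :=
  Finsupp.mapDomain_of_notMem_range _ _ fun ⟨m, hm⟩ ↦ h ⟨m, hm.symm⟩

lemma coeff_zero_expand_mul {k : ℤ} (f g : R[T;T⁻¹]) (hg : ∀ n ∈ g.coeff.support, |n| < k) :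
    (expand k f * g).coeff 0 = f.coeff 0 * g.coeff 0 := by
  rw [AddMonoidAlgebra.coeff_mul_apply_right, Finsupp.sum, Finset.sum_eq_single 0]
  · by_cases h0 : g.coeff 0 = 0
    · simp [h0]
    · have hk : k ≠ 0 := by have := hg 0 (by simpa using h0); simp at this; omega
      simpa using congrArg (· * g.coeff 0) (coeff_expand_mul hk f 0)
  · intro n hn hn0
    rw [coeff_expand_of_not_dvd, zero_mul]
    exact fun hdvd ↦ hn0 <| neg_eq_zero.1 <|
      Int.eq_zero_of_abs_lt_dvd (by simpa using hdvd) (by simpa using hg n hn)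
  · simp_all

end Expand

lemma pow_char_eq_expand (p : ℕ) [Fact p.Prime] (f : (ZMod p)[T;T⁻¹]) :
    f ^ p = expand p f := by
  have : CharP (ZMod p)[T;T⁻¹] p :=
    charP_of_injective_ringHom (f := C) AddMonoidAlgebra.single_right_injective p
  change frobenius _ p f = expand p f
  congr 1
  refine AddMonoidAlgebra.ringHom_ext (fun a ↦ ?_) (fun n ↦ ?_)
  · rw [frobenius_def, expand_single, mul_zero, single_eq_C, ← map_pow, ZMod.pow_card]
  · change frobenius _ p (T n) = expand p (T n)
    rw [frobenius_def, T_pow, expand_T]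

section Trinomial

variable [CommSemiring R]

lemma coeff_mul_trinomial (g : R[T;T⁻¹]) (n : ℤ) :
    (g * (T (-1) + 1 + T 1)).coeff n = g.coeff (n + 1) + g.coeff n + g.coeff (n - 1) := by
  simp only [mul_add, mul_one, T, AddMonoidAlgebra.coeff_add, Finsupp.add_apply,
    AddMonoidAlgebra.coeff_mul_single_apply]
  simp [sub_eq_add_neg]

lemma coeff_trinomial_pow_of_lt_abs {r : ℕ} {n : ℤ} (h : r < |n|) :
    ((T (-1) + 1 + T 1 : R[T;T⁻¹]) ^ r).coeff n = 0 := by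
  induction r generalizing n with
  | zero => simp_all [← T_zero, eq_comm]
  | succ r ih =>
    rw [lt_abs] at h
    rw [pow_succ, coeff_mul_trinomial, ih, ih, ih, add_zero, add_zero] <;>
      rw [lt_abs] <;> push_cast at h <;> omega

lemma coeff_zero_trinomial_sq : ((T (-1) + 1 + T 1 : R[T;T⁻¹]) ^ 2).coeff 0 = 3 := by
  rw [sq, coeff_mul_trinomial]
  simp [← T_zero, one_add_one_eq_two, two_add_one_eq_three]

end Trinomial

section Lucas

variable (p : ℕ) [Fact p.Prime]

lemma coeff_zero_trinomial_pow_mul_add {r : ℕ} (hr : r < p) (q : ℕ) :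
    ((T (-1) + 1 + T 1 : (ZMod p)[T;T⁻¹]) ^ (p * q + r)).coeff 0 =
      ((T (-1) + 1 + T 1 : (ZMod p)[T;T⁻¹]) ^ q).coeff 0 *
        ((T (-1) + 1 + T 1 : (ZMod p)[T;T⁻¹]) ^ r).coeff 0 := by
  rw [pow_add, pow_mul, pow_char_eq_expand, ← map_pow, coeff_zero_expand_mul]
  intro n hn
  by_contra! hpn
  exact Finsupp.mem_support_iff.1 hn (coeff_trinomial_pow_of_lt_abs (by omega))

theorem coeff_zero_trinomial_pow_eq_prod_digits (n : ℕ) :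
    ((T (-1) + 1 + T 1 : (ZMod p)[T;T⁻¹]) ^ n).coeff 0 =
      ((Nat.digits p n).map fun d ↦ ((T (-1) + 1 + T 1 : (ZMod p)[T;T⁻¹]) ^ d).coeff 0).prod := by
  induction n using Nat.strong_induction_on with
  | _ n ih =>
    rcases n.eq_zero_or_pos with rfl | hn
    · simp [← T_zero]
    have hp := (Fact.out : p.Prime)
    rw [Nat.digits_def' hp.one_lt hn, List.map_cons, List.prod_cons,
      ← ih _ (Nat.div_lt_self hn hp.one_lt), mul_comm,
      ← coeff_zero_trinomial_pow_mul_add p (Nat.mod_lt n hp.pos), Nat.div_add_mod]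

end Lucas

end LaurentPolynomial

theorem stmt_10 (n : ℕ) (h : 2 ∈ Nat.digits 3 n) :
    (3 : ℤ) ∣ ct ((T (-1) + 1 + T 1) ^ n) := by
  have hmod : (ct ((T (-1) + 1 + T 1) ^ n) : ZMod 3) = 0 := by
    rw [ct, ← eq_intCast (Int.castRingHom _), ← AddMonoidAlgebra.coeff_mapRingHom, map_pow,
      map_add, map_add, map_one, mapRingHom_T, mapRingHom_T,
      coeff_zero_trinomial_pow_eq_prod_digits]
    refine List.prod_eq_zero (List.mem_map.2 ⟨2, h, ?_⟩)
    rw [coeff_zero_trinomial_sq]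
    rfl
  exact_mod_cast (ZMod.intCast_zmod_eq_zero_iff_dvd _ 3).1 hmod
end

section
/- Let P(x) = a₋₁x⁻¹ + a₀ + a₁x with integer coefficients, a_n = ct[P(x)^n], and p a prime. Then p divides a_n for some n if and only if p divides a_n for some n < p. -/
/-!
Clearing the denominator, `ct (P ^ n)` is the central coefficient `[x ^ n] f ^ n` of the quadratic
`f = a₁ x² + a₀ x + a₋₁`. Modulo `p` we have `f ^ p = f (x ^ p)`, so for `r < p`
`f ^ (p q + r) = f (x ^ p) ^ q · f ^ r`, and since `deg f ^ r ≤ 2 r < p + r` only one term of this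
product contributes to the coefficient of `x ^ (p q + r)`. Hence the central coefficients satisfy
`c (p q + r) ≡ c q · c r (mod p)`; if `p ∣ c n`, then `p` divides the central coefficient of one
of the base-`p` digits of `n`.
-/

open LaurentPolynomial

/-- The Laurent trinomial `a₋₁ x⁻¹ + a₀ + a₁ x`. -/
noncomputable def Ptri (am1 a0 a1 : ℤ) : LaurentPolynomial ℤ :=
  C am1 * T (-1) + C a0 + C a1 * T 1

open Polynomial

theorem LaurentPolynomial.coeff_mul_T_add {R : Type*} [Semiring R] (f : R[T;T⁻¹]) (m n : ℤ) :
    (f * T n).coeff (m + n) = f.coeff m := by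
  rw [T, AddMonoidAlgebra.coeff_mul_single_add, mul_one]

theorem Polynomial.coeff_toLaurent_natCast {R : Type*} [Semiring R] (f : R[X]) (n : ℕ) :
    (toLaurent f).coeff n = f.coeff n := by
  rw [coeff_toLaurent]
  exact Finsupp.mapDomain_apply Nat.castEmbedding.injective _ n

theorem Polynomial.coeff_expand_mul_of_lt {R : Type*} [CommSemiring R] {p r : ℕ} (A B : R[X])
    (hr : r < p) (hB : B.natDegree < p + r) (q : ℕ) :
    (expand R p A * B).coeff (p * q + r) = A.coeff q * B.coeff r := by
  induction A using Polynomial.induction_on' with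
  | add f g hf hg => rw [map_add, add_mul, coeff_add, coeff_add, hf, hg, add_mul]
  | monomial i a =>
    rw [expand_monomial, ← C_mul_X_pow_eq_monomial, mul_assoc, coeff_C_mul, coeff_X_pow_mul',
      coeff_monomial]
    rcases lt_trichotomy i q with hiq | rfl | hqi
    · have hle : i * p + (p + r) ≤ p * q + r := by nlinarith
      rw [if_pos (by omega), if_neg hiq.ne, coeff_eq_zero_of_natDegree_lt (by omega), mul_zero,
        zero_mul]
    · rw [if_pos (by rw [mul_comm]; omega), if_pos rfl, mul_comm i p, Nat.add_sub_cancel_left]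
    · have hlt : p * q + r < i * p := by nlinarith
      rw [if_neg (by omega), if_neg hqi.ne', mul_zero, zero_mul]

noncomputable def Polynomial.centralCoeff {R : Type*} [Semiring R] (f : R[X]) (n : ℕ) : R :=
  (f ^ n).coeff n

theorem Polynomial.centralCoeff_map {R S : Type*} [Semiring R] [Semiring S] (g : R →+* S)
    (f : R[X]) (n : ℕ) : (f.map g).centralCoeff n = g (f.centralCoeff n) := by
  rw [centralCoeff, centralCoeff, ← Polynomial.map_pow, coeff_map]

theorem ZMod.centralCoeff_mul_add {p : ℕ} [Fact p.Prime] {f : (ZMod p)[X]}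
    (hf : f.natDegree ≤ 2) (q : ℕ) {r : ℕ} (hr : r < p) :
    f.centralCoeff (p * q + r) = f.centralCoeff q * f.centralCoeff r := by
  have hdeg : (f ^ r).natDegree < p + r :=
    natDegree_pow_le.trans_lt (by nlinarith)
  rw [centralCoeff, pow_add, pow_mul', ← ZMod.expand_card,
    coeff_expand_mul_of_lt _ _ hr hdeg, centralCoeff, centralCoeff]

theorem exists_lt_apply_eq_zero_of_apply_mul_add {M₀ : Type*} [MulZeroClass M₀]
    [NoZeroDivisors M₀] {p : ℕ} (hp : 1 < p) {c : ℕ → M₀}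
    (hc : ∀ q r, r < p → c (p * q + r) = c q * c r) (n : ℕ) (hn : c n = 0) :
    ∃ m < p, c m = 0 := by
  induction n using Nat.strong_induction_on with
  | _ n ih =>
    rcases lt_or_ge n p with hnp | hpn
    · exact ⟨n, hnp, hn⟩
    rw [← Nat.div_add_mod n p, hc _ _ (Nat.mod_lt n (by omega))] at hn
    rcases mul_eq_zero.mp hn with hq | hr
    · exact ih _ (Nat.div_lt_self (by omega) hp) hq
    · exact ⟨n % p, Nat.mod_lt n (by omega), hr⟩

theorem Ptri_mul_T_one (am1 a0 a1 : ℤ) :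
    Ptri am1 a0 a1 * T 1 =
      toLaurent (Polynomial.C a1 * X ^ 2 + Polynomial.C a0 * X + Polynomial.C am1) := by
  rw [Ptri, map_add, map_add, map_mul, map_mul, toLaurent_C, toLaurent_C, toLaurent_C,
    toLaurent_X, toLaurent_X_pow, add_mul, add_mul, mul_T_assoc, mul_T_assoc]
  rw [neg_add_cancel, T_zero, mul_one, one_add_one_eq_two, Nat.cast_ofNat]
  ring

theorem ct_Ptri_pow (am1 a0 a1 : ℤ) (n : ℕ) :
    ct (Ptri am1 a0 a1 ^ n) =
      (Polynomial.C a1 * X ^ 2 + Polynomial.C a0 * X + Polynomial.C am1).centralCoeff n := by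
  calc ct (Ptri am1 a0 a1 ^ n)
      = (Ptri am1 a0 a1 ^ n * T n).coeff (0 + n) := (coeff_mul_T_add _ 0 n).symm
    _ = ((Ptri am1 a0 a1 * T 1) ^ n).coeff n := by rw [zero_add, mul_pow, T_pow, mul_one]
    _ = _ := by rw [Ptri_mul_T_one, ← map_pow, coeff_toLaurent_natCast, centralCoeff]

theorem stmt_16 (am1 a0 a1 : ℤ) (p : ℕ) (hp : p.Prime) :
    (∃ n : ℕ, (p : ℤ) ∣ ct ((Ptri am1 a0 a1) ^ n)) ↔
      (∃ n : ℕ, n < p ∧ (p : ℤ) ∣ ct ((Ptri am1 a0 a1) ^ n)) := by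
  have : Fact p.Prime := ⟨hp⟩
  set f := Polynomial.C a1 * X ^ 2 + Polynomial.C a0 * X + Polynomial.C am1
  set fbar := f.map (Int.castRingHom (ZMod p))
  have hdeg : fbar.natDegree ≤ 2 := natDegree_map_le.trans natDegree_quadratic_le
  have hdvd : ∀ n, (p : ℤ) ∣ ct (Ptri am1 a0 a1 ^ n) ↔ fbar.centralCoeff n = 0 := fun n => by
    rw [ct_Ptri_pow, centralCoeff_map, eq_intCast (Int.castRingHom (ZMod p)),
      ZMod.intCast_zmod_eq_zero_iff_dvd]
  simp only [hdvd]
  exact ⟨fun ⟨n, hn⟩ => exists_lt_apply_eq_zero_of_apply_mul_add hp.one_lt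
      (ZMod.centralCoeff_mul_add hdeg) n hn, fun ⟨n, _, hn⟩ => ⟨n, hn⟩⟩
end
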